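/- arXiv:2201.10640 — 2 statements merged into one kernel-verified Lean document; each statement's English description precedes it below -/
import Mathlib

section
/- Let θ(t) = t² − (5/3)t⁴ and ψ(x,y) = 1/4 + x/h_x + (θ(2x/h_x) − θ(2y/h_y))/(4θ(1)) on K̂ = (−h_x/2, h_x/2) × (−h_y/2, h_y/2). Then ∫_{K̂} |∇ψ|² dx dy = (37/28)(h_x/h_y) + (65/28)(h_y/h_x). -/
/-!
With `θ(1) = -2/3` the gradient components become `1/h_x + g_{h_x}(x)` and `-g_{h_y}(y)` for the
odd polynomial `g_h(t) = -3t/h² + 40t³/h⁴`, so `|∇ψ|²` is a sum of a function of `x` and a function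
of `y`, and the double integral reduces to the one-dimensional integrals
`∫ (a + g_h)² = a² h + 37/(28h)` over `(-h/2, h/2)`.
-/

open intervalIntegral

/-- `θ'(2t/h) / (2h θ(1))` after substituting `θ(1) = -2/3`. -/
noncomputable def dssyGrad (h t : ℝ) : ℝ := -3 * t / h ^ 2 + 40 * t ^ 3 / h ^ 4

@[fun_prop]
theorem continuous_dssyGrad (h : ℝ) : Continuous (dssyGrad h) := by
  unfold dssyGrad
  fun_prop

theorem hasDerivAt_theta (t : ℝ) :
    HasDerivAt (fun t => t ^ 2 - 5 / 3 * t ^ 4) (2 * t - 20 / 3 * t ^ 3) t :=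
  ((hasDerivAt_pow 2 t).sub ((hasDerivAt_pow 4 t).const_mul (5 / 3))).congr_deriv
    (by push_cast; ring)

theorem integral_integral_add {f g : ℝ → ℝ} {a b c d : ℝ}
    (hf : IntervalIntegrable f MeasureTheory.volume a b)
    (hg : IntervalIntegrable g MeasureTheory.volume c d) :
    ∫ x in a..b, ∫ y in c..d, (f x + g y) =
      (d - c) * (∫ x in a..b, f x) + (b - a) * ∫ y in c..d, g y := by
  have inner : ∀ x, ∫ y in c..d, (f x + g y) = (d - c) * f x + ∫ y in c..d, g y := fun x => by
    rw [integral_add intervalIntegrable_const hg, integral_const, smul_eq_mul]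
  simp_rw [inner]
  rw [integral_add (hf.const_mul _) intervalIntegrable_const, integral_const_mul, integral_const,
    smul_eq_mul]

theorem integral_sq_const_add_dssyGrad (a : ℝ) {h : ℝ} (hh : h ≠ 0) :
    ∫ t in (-(h / 2))..(h / 2), (a + dssyGrad h t) ^ 2 = a ^ 2 * h + 37 / (28 * h) := by
  have antideriv : ∀ t, HasDerivAt
      (fun t => a ^ 2 * t - 3 * a / h ^ 2 * t ^ 2 + 3 / h ^ 4 * t ^ 3 + 20 * a / h ^ 4 * t ^ 4
        - 48 / h ^ 6 * t ^ 5 + 1600 / (7 * h ^ 8) * t ^ 7)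
      ((a + dssyGrad h t) ^ 2) t := fun t => by
    refine (((((((hasDerivAt_id t).const_mul (a ^ 2)).sub
      ((hasDerivAt_pow 2 t).const_mul (3 * a / h ^ 2))).add
      ((hasDerivAt_pow 3 t).const_mul (3 / h ^ 4))).add
      ((hasDerivAt_pow 4 t).const_mul (20 * a / h ^ 4))).sub
      ((hasDerivAt_pow 5 t).const_mul (48 / h ^ 6))).add
      ((hasDerivAt_pow 7 t).const_mul (1600 / (7 * h ^ 8)))).congr_deriv ?_
    simp only [dssyGrad]
    field_simp
    ring
  rw [integral_eq_sub_of_hasDerivAt (fun t _ => antideriv t)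
    (Continuous.intervalIntegrable (by fun_prop) _ _)]
  field_simp
  ring

theorem integral_sq_dssyGrad {h : ℝ} (hh : h ≠ 0) :
    ∫ t in (-(h / 2))..(h / 2), dssyGrad h t ^ 2 = 37 / (28 * h) := by
  simpa using integral_sq_const_add_dssyGrad 0 hh

/-- `∫_{K̂} |∇ψ|² = (37/28)(h_x/h_y) + (65/28)(h_y/h_x)` for the DSSY
basis function `ψ` associated with the right vertical edge, whose gradient is
`(1/h_x + θ'(2x/h_x)/(2h_x θ(1)), −θ'(2y/h_y)/(2h_y θ(1)))`. -/
theorem dssy_diagonal_stiffness (hx hy : ℝ) (hhx : 0 < hx) (hhy : 0 < hy)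
    (θ θd : ℝ → ℝ) (hθ : ∀ t, θ t = t ^ 2 - 5 / 3 * t ^ 4)
    (hθd : ∀ t, HasDerivAt θ (θd t) t) :
    (∫ x in (-(hx / 2))..(hx / 2), ∫ y in (-(hy / 2))..(hy / 2),
        ((1 / hx + θd (2 * x / hx) / (2 * hx * θ 1)) ^ 2 +
         (-(θd (2 * y / hy) / (2 * hy * θ 1))) ^ 2)) =
      37 / 28 * (hx / hy) + 65 / 28 * (hy / hx) := by
  have hθd_eq : ∀ t, θd t = 2 * t - 20 / 3 * t ^ 3 := fun t =>
    (hθd t).unique (by rw [funext hθ]; exact hasDerivAt_theta t)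
  have grad : ∀ h t, h ≠ 0 → θd (2 * t / h) / (2 * h * θ 1) = dssyGrad h t := fun h t hh => by
    rw [hθd_eq, hθ, dssyGrad]
    field_simp
    ring
  simp_rw [grad hx _ hhx.ne', grad hy _ hhy.ne', neg_sq]
  rw [integral_integral_add (Continuous.intervalIntegrable (by fun_prop) _ _)
      (Continuous.intervalIntegrable (by fun_prop) _ _),
    integral_sq_const_add_dssyGrad _ hhx.ne', integral_sq_dssyGrad hhy.ne']
  field_simp
  ring
end

section
/- Let A be the global DSSY stiffness matrix on an n_x × n_y tensor-product rectangular mesh of the unit square with elementwise-constant coefficient κ_{jk} > 0. Suppose all off-diagonal entries A^{β,β}_{j,k−1,j,k} = ((9/28)/γ_{jk} + (37/28)γ_{jk})κ_{jk} and A^{α,β}_{jk,jk} = −(37/28)(1/γ_{jk} + γ_{jk})κ_{jk} are known for all interior elements, and the ratio identity γ_{jk} = γ_{j,k+1}γ_{j+1,k}/γ_{j+1,k+1} holds. Then the full collections (κ_{jk}) and (γ_{jk}), and hence all mesh sizes h_{x_j} = 1/∑_k γ_{jk} and h_{y_k} = 1/∑_j (1/γ_{jk}), are uniquely determined by these matrix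 entries. -/
lemma ams_key (a b a' b' : ℝ) (ha : 0 < a) (hb : 0 < b) (ha' : 0 < a') (hb' : 0 < b')
    (h1 : -(37/28) * (1/a + a) * b = -(37/28) * (1/a' + a') * b')
    (h2 : (9/28 * (1/a) + 37/28 * a) * b = (9/28 * (1/a') + 37/28 * a') * b') :
    a = a' ∧ b = b' := by
  have ha0 := ha.ne'
  have ha'0 := ha'.ne'
  field_simp at h1 h2
  have hv : a * b = a' * b' := by nlinarith [mul_pos ha ha', mul_pos hb hb']
  have hX : b * a' = b' * a := by nlinarith [mul_pos ha ha']
  have hbb : b = b' := by nlinarith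
  constructor
  · subst hbb; exact mul_right_cancel₀ hb.ne' hv
  · exact hbb

/-- Proposition 3.1: on an `n_x × n_y` tensor-product rectangular
mesh of the unit square, the elementwise coefficients `κ_{jk} > 0` and the aspect
ratios `γ_{jk} > 0` (hence the mesh sizes `h_{x_j} = 1/∑_k γ_{jk}`,
`h_{y_k} = 1/∑_j 1/γ_{jk}`) are uniquely determined by the stiffness entries
`A^{β,β}_{j,k−1,j,k} = ((9/28)/γ_{jk} + (37/28)γ_{jk})κ_{jk}` (known for
non-corner elements) and `A^{α,β}_{jk,jk} = −(37/28)(1/γ_{jk} + γ_{jk})κ_{jk}`,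
together with the ratio identity `γ_{jk} γ_{j+1,k+1} = γ_{j,k+1} γ_{j+1,k}`. -/
theorem ams_recovery_unique
    (nx ny : ℕ) (hnx : 3 ≤ nx) (hny : 3 ≤ ny)
    (κ γ κ' γ' : ℕ → ℕ → ℝ)
    (hκpos : ∀ j < nx, ∀ k < ny, 0 < κ j k) (hγpos : ∀ j < nx, ∀ k < ny, 0 < γ j k)
    (hκ'pos : ∀ j < nx, ∀ k < ny, 0 < κ' j k) (hγ'pos : ∀ j < nx, ∀ k < ny, 0 < γ' j k)
    -- ratio identity for both collections of aspect ratios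
    (hratio : ∀ j k, j + 1 < nx → k + 1 < ny →
      γ j k * γ (j + 1) (k + 1) = γ j (k + 1) * γ (j + 1) k)
    (hratio' : ∀ j k, j + 1 < nx → k + 1 < ny →
      γ' j k * γ' (j + 1) (k + 1) = γ' j (k + 1) * γ' (j + 1) k)
    -- the entries A^{α,β}_{jk,jk} agree for all elements
    (hC : ∀ j < nx, ∀ k < ny,
      -(37 / 28) * (1 / γ j k + γ j k) * κ j k =
        -(37 / 28) * (1 / γ' j k + γ' j k) * κ' j k)
    -- the entries A^{β,β}_{j,k−1,j,k} agree for all non-corner elements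
    (hB : ∀ j < nx, ∀ k < ny, ¬((j = 0 ∨ j = nx - 1) ∧ (k = 0 ∨ k = ny - 1)) →
      (9 / 28 * (1 / γ j k) + 37 / 28 * γ j k) * κ j k =
        (9 / 28 * (1 / γ' j k) + 37 / 28 * γ' j k) * κ' j k) :
    (∀ j < nx, ∀ k < ny, γ j k = γ' j k ∧ κ j k = κ' j k) ∧
    (∀ j < nx,
      1 / (∑ k ∈ Finset.range ny, γ j k) = 1 / (∑ k ∈ Finset.range ny, γ' j k)) ∧
    (∀ k < ny,
      1 / (∑ j ∈ Finset.range nx, 1 / γ j k) =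
        1 / (∑ j ∈ Finset.range nx, 1 / γ' j k)) := by
  -- non-corner elements: both γ and κ are determined
  have hnc : ∀ j, j < nx → ∀ k, k < ny →
      ¬((j = 0 ∨ j = nx - 1) ∧ (k = 0 ∨ k = ny - 1)) →
      γ j k = γ' j k ∧ κ j k = κ' j k := by
    intro j hj k hk h
    exact ams_key _ _ _ _ (hγpos j hj k hk) (hκpos j hj k hk)
      (hγ'pos j hj k hk) (hκ'pos j hj k hk) (hC j hj k hk) (hB j hj k hk h)
  -- γ everywhere
  have hγeq : ∀ j < nx, ∀ k < ny, γ j k = γ' j k := by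
    intro j hj k hk
    by_cases h : (j = 0 ∨ j = nx - 1) ∧ (k = 0 ∨ k = ny - 1)
    · obtain ⟨hj', hk'⟩ := h
      rcases hj' with hj' | hj' <;> rcases hk' with hk' | hk' <;> subst hj' <;> subst hk'
      · -- corner (0,0)
        have hr := hratio 0 0 (by omega) (by omega)
        have hr' := hratio' 0 0 (by omega) (by omega)
        have e1 := (hnc 0 (by omega) 1 (by omega) (by omega)).1
        have e2 := (hnc 1 (by omega) 0 (by omega) (by omega)).1
        have e3 := (hnc 1 (by omega) 1 (by omega) (by omega)).1
        have h3 := (hγpos 1 (by omega) 1 (by omega)).ne'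
        rw [e1, e2, ← hr'] at hr
        rw [e3] at hr
        exact mul_right_cancel₀ ((e3 ▸ h3)) hr
      · -- corner (0, ny-1)
        have h2 : ny - 2 + 1 = ny - 1 := by omega
        have hr := hratio 0 (ny - 2) (by omega) (by omega)
        have hr' := hratio' 0 (ny - 2) (by omega) (by omega)
        rw [h2] at hr hr'
        have e1 := (hnc 0 (by omega) (ny - 2) (by omega) (by omega)).1
        have e2 := (hnc 1 (by omega) (ny - 1) (by omega) (by omega)).1
        have e3 := (hnc 1 (by omega) (ny - 2) (by omega) (by omega)).1
        -- hr : γ 0 (ny-2) * γ 1 (ny-1) = γ 0 (ny-1) * γ 1 (ny-2)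
        rw [e1, e2, hr'] at hr
        rw [e3] at hr
        have h3 := (hγ'pos 1 (by omega) (ny - 2) (by omega)).ne'
        exact mul_right_cancel₀ h3 hr.symm
      · -- corner (nx-1, 0)
        have h2 : nx - 2 + 1 = nx - 1 := by omega
        have hr := hratio (nx - 2) 0 (by omega) (by omega)
        have hr' := hratio' (nx - 2) 0 (by omega) (by omega)
        rw [h2] at hr hr'
        have e1 := (hnc (nx - 2) (by omega) 0 (by omega) (by omega)).1
        have e2 := (hnc (nx - 1) (by omega) 1 (by omega) (by omega)).1
        have e3 := (hnc (nx - 2) (by omega) 1 (by omega) (by omega)).1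
        -- hr : γ (nx-2) 0 * γ (nx-1) 1 = γ (nx-2) 1 * γ (nx-1) 0
        rw [e1, e2, hr'] at hr
        rw [e3] at hr
        have h3 := (hγ'pos (nx - 2) (by omega) 1 (by omega)).ne'
        have := mul_left_cancel₀ h3 hr.symm
        exact this
      · -- corner (nx-1, ny-1)
        have h2 : nx - 2 + 1 = nx - 1 := by omega
        have h2' : ny - 2 + 1 = ny - 1 := by omega
        have hr := hratio (nx - 2) (ny - 2) (by omega) (by omega)
        have hr' := hratio' (nx - 2) (ny - 2) (by omega) (by omega)
        rw [h2, h2'] at hr hr'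
        have e1 := (hnc (nx - 2) (by omega) (ny - 2) (by omega) (by omega)).1
        have e2 := (hnc (nx - 2) (by omega) (ny - 1) (by omega) (by omega)).1
        have e3 := (hnc (nx - 1) (by omega) (ny - 2) (by omega) (by omega)).1
        -- hr : γ (nx-2)(ny-2) * γ (nx-1)(ny-1) = γ (nx-2)(ny-1) * γ (nx-1)(ny-2)
        rw [e1, e2, e3, ← hr'] at hr
        have h1 := (hγ'pos (nx - 2) (by omega) (ny - 2) (by omega)).ne'
        exact mul_left_cancel₀ h1 hr
    · exact (hnc j hj k hk h).1
  -- κ everywhere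
  have hκeq : ∀ j < nx, ∀ k < ny, κ j k = κ' j k := by
    intro j hj k hk
    have hc := hC j hj k hk
    rw [← hγeq j hj k hk] at hc
    have hg := hγpos j hj k hk
    have hne : -(37 / 28 : ℝ) * (1 / γ j k + γ j k) ≠ 0 := by
      have h1 : (0:ℝ) < 1 / γ j k + γ j k := by positivity
      intro h; nlinarith
    exact mul_left_cancel₀ hne hc
  refine ⟨fun j hj k hk => ⟨hγeq j hj k hk, hκeq j hj k hk⟩, ?_, ?_⟩
  · intro j hj
    congr 1
    exact Finset.sum_congr rfl fun k hk => hγeq j hj k (Finset.mem_range.mp hk)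
  · intro k hk
    congr 1
    exact Finset.sum_congr rfl fun j hj => by
      rw [hγeq j (Finset.mem_range.mp hj) k hk]
end
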